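/- arXiv:2408.02794 — 4 statements merged into one kernel-verified Lean document; each statement's English description precedes it below -/
import Mathlib

section
/- Let N be an odd positive integer and let k be a positive integer. Then the sum of 2^(p_m + t_m), taken over all divisors m of N such that m^2 divides N*k, equals σ(N), the number of positive divisors of N. -/
/-- `p_m`: the number of odd primes dividing `N*m'/m^2` but not `k/m'`, where `m' = gcd(m,k)`. -/
def pm (N k m : ℕ) : ℕ :=
  ((N * Nat.gcd m k / m ^ 2).primeFactors.filter
    (fun p => p ≠ 2 ∧ ¬ p ∣ k / Nat.gcd m k)).card

/-- `t_m`: equal to `0` if `N*m'/m^2` is odd, or `4 ∣ k/m'`, or both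
`N*m'/m^2 ≡ 2 (mod 4)` and `k/m'` is odd; and equal to `1` otherwise. -/
def tm (N k m : ℕ) : ℕ :=
  if Odd (N * Nat.gcd m k / m ^ 2) ∨ 4 ∣ k / Nat.gcd m k ∨
      ((N * Nat.gcd m k / m ^ 2) % 4 = 2 ∧ Odd (k / Nat.gcd m k)) then 0 else 1

/-!
For odd `N` the number `N * m' / m ^ 2` divides `N`, hence is odd, so every `t_m` vanishes and
the sum is `∑ 2 ^ p_m`. This sum is multiplicative in `N`: a divisor of a coprime product `a * b`
is uniquely `m₁ * m₂` with `m₁ ∣ a`, `m₂ ∣ b`, and then `p_m = p_{m₁} + p_{m₂}`. For `N = p ^ n`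
with `p ^ c ∥ k`, the divisor `p ^ b` occurs iff `2b ≤ n + c`, and contributes `2` instead of `1`
iff moreover `c ≤ b` and `2b < n + c`. The reflection `b ↦ n + c - b` maps these exponents onto
the exponents `b ≤ n` with `2b > n + c`, so the sum is `n + 1`, the number of divisors of `p ^ n`.
-/

open Finset

lemma Nat.Prime.dvd_div_mul_iff {p d e x : ℕ} (hp : p.Prime) (hpe : ¬ p ∣ e) (hde : d * e ∣ x) :
    p ∣ x / (d * e) ↔ p ∣ x / d := by
  have hx : x / d = e * (x / (d * e)) := by
    rw [← Nat.div_div_eq_div_mul, Nat.mul_div_cancel' ((Nat.dvd_div_iff_mul_dvd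
      (dvd_of_mul_right_dvd hde)).mpr hde)]
  rw [hx, hp.dvd_mul, or_iff_right hpe]

theorem Nat.Coprime.sum_divisors_mul_eq_sum_sum {β : Type*} [AddCommMonoid β] {a b : ℕ}
    (hab : a.Coprime b) (f : ℕ → β) :
    ∑ d ∈ (a * b).divisors, f d = ∑ d₁ ∈ a.divisors, ∑ d₂ ∈ b.divisors, f (d₁ * d₂) := by
  rw [hab.divisors_mul, sum_map, ← sum_product']
  exact sum_attach _ fun d : ℕ × ℕ => f (d.1 * d.2)

lemma card_filter_two_mul_le_add_card_filter_le_and_lt (n c : ℕ) :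
    #{b ∈ range (n + 1) | 2 * b ≤ n + c} + #{b ∈ range (n + 1) | c ≤ b ∧ 2 * b < n + c}
      = n + 1 := by
  have hreflect : #{b ∈ range (n + 1) | c ≤ b ∧ 2 * b < n + c}
      = #{b ∈ range (n + 1) | ¬ 2 * b ≤ n + c} := by
    refine card_nbij' (fun b => n + c - b) (fun b => n + c - b) ?_ ?_ ?_ ?_ <;>
      intro b <;> simp only [coe_filter, mem_range, Set.mem_ofPred_eq] <;> omega
  rw [hreflect, card_filter_add_card_filter_not, card_range]

lemma sq_dvd_mul_gcd {N k m : ℕ} (hm : m ∣ N) (h : m ^ 2 ∣ N * k) :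
    m ^ 2 ∣ N * Nat.gcd m k := by
  rw [← Nat.gcd_mul_left]
  exact Nat.dvd_gcd (by rw [sq]; exact mul_dvd_mul_right hm m) h

lemma mul_gcd_div_sq_dvd {N k m : ℕ} (hm : m ∣ N) (h : m ^ 2 ∣ N * k) :
    N * Nat.gcd m k / m ^ 2 ∣ N := by
  rcases eq_or_ne m 0 with rfl | hm0
  · simp [zero_dvd_iff.mp hm]
  rw [Nat.div_dvd_iff_dvd_mul (sq_dvd_mul_gcd hm h) (by positivity), mul_comm (m ^ 2)]
  exact mul_dvd_mul_left N ((Nat.gcd_dvd_left m k).trans (dvd_pow_self m two_ne_zero))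

lemma mul_gcd_div_sq_ne_zero {N k m : ℕ} (hN : N ≠ 0) (hm : m ∣ N) (h : m ^ 2 ∣ N * k) :
    N * Nat.gcd m k / m ^ 2 ≠ 0 := by
  have hm0 : m ≠ 0 := ne_zero_of_dvd_ne_zero hN hm
  rw [Ne, Nat.div_eq_zero_iff_lt (by positivity), not_lt]
  exact Nat.le_of_dvd (by positivity) (sq_dvd_mul_gcd hm h)

lemma tm_eq_zero_of_odd {N k m : ℕ} (hN : Odd N) (hm : m ∣ N) (h : m ^ 2 ∣ N * k) :
    tm N k m = 0 :=
  if_pos (Or.inl (hN.of_dvd_nat (mul_gcd_div_sq_dvd hm h)))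

lemma pm_mul {a b k m₁ m₂ : ℕ} (hab : a.Coprime b) (ha : a ≠ 0) (hb : b ≠ 0)
    (hm₁ : m₁ ∣ a) (hm₂ : m₂ ∣ b) (h₁ : m₁ ^ 2 ∣ a * k) (h₂ : m₂ ^ 2 ∣ b * k) :
    pm (a * b) k (m₁ * m₂) = pm a k m₁ + pm b k m₂ := by
  unfold pm
  set g₁ := Nat.gcd m₁ k
  set g₂ := Nat.gcd m₂ k
  have hg : Nat.gcd (m₁ * m₂) k = g₁ * g₂ := by
    rw [Nat.gcd_comm, ((hab.coprime_dvd_left hm₁).coprime_dvd_right hm₂).gcd_mul k,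
      Nat.gcd_comm k, Nat.gcd_comm k]
  have hg_dvd : g₁ * g₂ ∣ k := hg ▸ Nat.gcd_dvd_right _ _
  have hA := mul_gcd_div_sq_dvd hm₁ h₁
  have hB := mul_gcd_div_sq_dvd hm₂ h₂
  have hQ : a * b * (g₁ * g₂) / (m₁ * m₂) ^ 2 = (a * g₁ / m₁ ^ 2) * (b * g₂ / m₂ ^ 2) := by
    rw [Nat.div_mul_div_comm (sq_dvd_mul_gcd hm₁ h₁) (sq_dvd_mul_gcd hm₂ h₂), mul_pow,
      mul_mul_mul_comm]
  have hdisj : Disjoint (a * g₁ / m₁ ^ 2).primeFactors (b * g₂ / m₂ ^ 2).primeFactors :=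
    hab.disjoint_primeFactors.mono (Nat.primeFactors_mono hA ha) (Nat.primeFactors_mono hB hb)
  rw [hg, hQ, Nat.primeFactors_mul (mul_gcd_div_sq_ne_zero ha hm₁ h₁)
    (mul_gcd_div_sq_ne_zero hb hm₂ h₂), filter_union,
    card_union_of_disjoint (hdisj.mono (filter_subset _ _) (filter_subset _ _))]
  congr 2 <;> refine filter_congr fun p hp => ?_ <;> rw [Nat.mem_primeFactors] at hp
  · have hpg₂ : ¬ p ∣ g₂ := fun h => hp.1.ne_one <| Nat.eq_one_of_dvd_coprimes hab
      (hp.2.1.trans hA) (h.trans ((Nat.gcd_dvd_left m₂ k).trans hm₂))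
    rw [hp.1.dvd_div_mul_iff hpg₂ hg_dvd]
  · have hpg₁ : ¬ p ∣ g₁ := fun h => hp.1.ne_one <| Nat.eq_one_of_dvd_coprimes hab
      (h.trans ((Nat.gcd_dvd_left m₁ k).trans hm₁)) (hp.2.1.trans hB)
    rw [mul_comm g₁, hp.1.dvd_div_mul_iff hpg₁ (mul_comm g₁ g₂ ▸ hg_dvd)]

lemma mul_sq_dvd_iff {a b k m₁ m₂ : ℕ} (hab : a.Coprime b) (hm₁ : m₁ ∣ a) (hm₂ : m₂ ∣ b) :
    (m₁ * m₂) ^ 2 ∣ a * b * k ↔ m₁ ^ 2 ∣ a * k ∧ m₂ ^ 2 ∣ b * k := by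
  have hcop₁ : (m₁ ^ 2).Coprime b := (hab.coprime_dvd_left hm₁).pow_left 2
  have hcop₂ : (m₂ ^ 2).Coprime a := (hab.symm.coprime_dvd_left hm₂).pow_left 2
  rw [mul_pow]
  constructor
  · intro h
    exact ⟨hcop₁.dvd_of_dvd_mul_right ((dvd_mul_right _ _).trans (h.trans (dvd_of_eq (by ring)))),
      hcop₂.dvd_of_dvd_mul_right ((dvd_mul_left _ _).trans (h.trans (dvd_of_eq (by ring))))⟩
  · rintro ⟨h₁, h₂⟩
    exact (hcop₁.coprime_dvd_right hm₂ |>.pow_right 2).mul_dvd_of_dvd_of_dvd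
      (h₁.trans ⟨b, by ring⟩) (h₂.trans ⟨a, by ring⟩)

def pmSum (N k : ℕ) : ℕ :=
  ∑ m ∈ N.divisors with m ^ 2 ∣ N * k, 2 ^ pm N k m

lemma pmSum_mul {a b : ℕ} (k : ℕ) (hab : a.Coprime b) (ha : a ≠ 0) (hb : b ≠ 0) :
    pmSum (a * b) k = pmSum a k * pmSum b k := by
  simp only [pmSum, sum_filter]
  rw [hab.sum_divisors_mul_eq_sum_sum, sum_mul_sum]
  refine sum_congr rfl fun m₁ hm₁ => sum_congr rfl fun m₂ hm₂ => ?_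
  rw [Nat.mem_divisors] at hm₁ hm₂
  by_cases h₁ : m₁ ^ 2 ∣ a * k <;> by_cases h₂ : m₂ ^ 2 ∣ b * k <;>
    simp [mul_sq_dvd_iff hab hm₁.1 hm₂.1, h₁, h₂, pm_mul hab ha hb hm₁.1 hm₂.1, pow_add]

lemma gcd_prime_pow_pow_mul {p b c k' : ℕ} (hp : p.Prime) (hk' : ¬ p ∣ k') :
    Nat.gcd (p ^ b) (p ^ c * k') = p ^ min b c := by
  rw [Nat.Coprime.gcd_mul_right_cancel_right _ ((hp.coprime_iff_not_dvd.2 hk').pow_left b).symm]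
  rcases le_total b c with h | h
  · rw [min_eq_left h, Nat.gcd_eq_left (pow_dvd_pow p h)]
  · rw [min_eq_right h, Nat.gcd_eq_right (pow_dvd_pow p h)]

lemma pm_prime_pow {p n c k' b : ℕ} (hp : p.Prime) (hp2 : p ≠ 2) (hk' : ¬ p ∣ k')
    (hbn : b ≤ n) (hb : 2 * b ≤ n + c) :
    pm (p ^ n) (p ^ c * k') (p ^ b) = if c ≤ b ∧ 2 * b < n + c then 1 else 0 := by
  have hQ : p ^ n * p ^ min b c / (p ^ b) ^ 2 = p ^ (n + min b c - 2 * b) := by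
    rw [← pow_add, ← pow_mul, mul_comm b, Nat.pow_div (by omega) hp.pos]
  have hk : p ^ c * k' / p ^ min b c = p ^ (c - min b c) * k' := by
    rw [← pow_sub_mul_pow p (min_le_right b c), mul_comm (p ^ _), mul_assoc,
      Nat.mul_div_cancel_left _ (pow_pos hp.pos _)]
  have hdvd : p ∣ p ^ (c - min b c) * k' ↔ b < c := by
    rw [hp.dvd_mul, or_iff_left hk', dvd_pow_self_iff, or_iff_left hp.not_isUnit]
    omega
  unfold pm
  rw [gcd_prime_pow_pow_mul hp hk', hQ, hk]
  rcases eq_or_ne (n + min b c - 2 * b) 0 with he | he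
  · rw [he, pow_zero, Nat.primeFactors_one, filter_empty, card_empty, if_neg (by omega)]
  · simp only [Nat.primeFactors_prime_pow he hp, filter_singleton, hp2, hdvd, ne_eq,
      not_false_eq_true, true_and]
    split_ifs <;> first | rfl | omega

lemma pmSum_prime_pow {p k' : ℕ} (hp : p.Prime) (hp2 : p ≠ 2) (hk' : ¬ p ∣ k') (n c : ℕ) :
    pmSum (p ^ n) (p ^ c * k') = n + 1 := by
  have hsq (b : ℕ) : (p ^ b) ^ 2 ∣ p ^ n * (p ^ c * k') ↔ 2 * b ≤ n + c := by
    rw [← pow_mul, ← mul_assoc, ← pow_add,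
      ((hp.coprime_iff_not_dvd.2 hk').pow_left _).dvd_mul_right,
      Nat.pow_dvd_pow_iff_le_right hp.one_lt, mul_comm]
  refine Eq.trans ?_ (card_filter_two_mul_le_add_card_filter_le_and_lt n c)
  rw [pmSum, sum_filter, Nat.sum_divisors_prime_pow hp, card_filter, card_filter,
    ← sum_add_distrib]
  refine sum_congr rfl fun b hb => ?_
  rw [mem_range] at hb
  by_cases h : 2 * b ≤ n + c
  · rw [if_pos ((hsq b).2 h), pm_prime_pow hp hp2 hk' (by omega) h, if_pos h]
    split_ifs <;> rfl
  · rw [if_neg (mt (hsq b).1 h), if_neg h, if_neg (by omega)]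
    rfl

lemma pmSum_eq_card_divisors {N k : ℕ} (hN : Odd N) (hk : k ≠ 0) : pmSum N k = #N.divisors := by
  induction N using Nat.recOnPosPrimePosCoprime with
  | prime_pow p n hp hn =>
    have hp2 : p ≠ 2 := by
      rintro rfl
      exact Nat.not_odd_iff_even.2 (Nat.even_pow.2 ⟨even_two, hn.ne'⟩) hN
    obtain ⟨c, k', hk', rfl⟩ := Nat.exists_eq_pow_mul_and_not_dvd hk p hp.ne_one
    rw [pmSum_prime_pow hp hp2 hk', Nat.divisors_prime_pow hp, card_map, card_range]
  | zero => exact absurd hN (by decide)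
  | one => simp [pmSum, pm, filter_singleton]
  | coprime a b ha hb hab iha ihb =>
    obtain ⟨hoa, hob⟩ := Nat.odd_mul.1 hN
    rw [pmSum_mul k hab (by omega) (by omega), iha hoa, ihb hob, hab.card_divisors_mul]

theorem sum_over_divisors_odd_case_general (N k : ℕ) (hNodd : Odd N) (hk : 0 < k) :
    ∑ m ∈ N.divisors.filter (fun m => m ^ 2 ∣ N * k), 2 ^ (pm N k m + tm N k m)
      = N.divisors.card := by
  rw [← pmSum_eq_card_divisors hNodd hk.ne', pmSum]
  refine sum_congr rfl fun m hm => ?_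
  rw [mem_filter, Nat.mem_divisors] at hm
  rw [tm_eq_zero_of_odd hNodd hm.1.1 hm.2, add_zero]

theorem sum_over_divisors_odd_case (N k : ℕ) (hN : 0 < N) (hNodd : Odd N) (hk : 0 < k) :
    ∑ m ∈ N.divisors.filter (fun m => m ^ 2 ∣ N * k), 2 ^ (pm N k m + tm N k m)
      = N.divisors.card :=
  sum_over_divisors_odd_case_general N k hNodd hk
end

section
/- Let N be an odd positive integer, k a positive integer, m a divisor of N with m^2 dividing N*k, and d a divisor of N. Then gcd(d, N*k/d) = m if and only if for every prime p, either v_p(d) = v_p(m), or both v_p(k) ≤ v_p(m) and v_p(d) = v_p(N) + v_p(k) − v_p(m). -/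
theorem gcd_eq_iff_valuations (N k m d : ℕ) (hN : 0 < N) (hNodd : Odd N) (hk : 0 < k)
    (hm : m ∣ N) (hm2 : m ^ 2 ∣ N * k) (hd : d ∣ N) :
    Nat.gcd d (N * k / d) = m ↔
      ∀ p : ℕ, p.Prime →
        (d.factorization p = m.factorization p ∨
          (k.factorization p ≤ m.factorization p ∧
            d.factorization p =
              N.factorization p + k.factorization p - m.factorization p)) := by
  have hd0 : d ≠ 0 := (Nat.pos_of_dvd_of_pos hd hN).ne'
  have hm0 : m ≠ 0 := (Nat.pos_of_dvd_of_pos hm hN).ne'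
  have hN0 : N ≠ 0 := hN.ne'
  have hk0 : k ≠ 0 := hk.ne'
  have hdNk : d ∣ N * k := dvd_mul_of_dvd_left hd k
  have hq0 : N * k / d ≠ 0 :=
    (Nat.div_pos (Nat.le_of_dvd (Nat.mul_pos hN hk) hdNk) (Nat.pos_of_ne_zero hd0)).ne'
  have hfg : ∀ p : ℕ, (Nat.gcd d (N * k / d)).factorization p =
      min (d.factorization p)
        (N.factorization p + k.factorization p - d.factorization p) := by
    intro p
    rw [Nat.factorization_gcd hd0 hq0, Finsupp.inf_apply, Nat.factorization_div hdNk,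
      Finsupp.tsub_apply, Nat.factorization_mul hN0 hk0, Finsupp.add_apply]
  have key : Nat.gcd d (N * k / d) = m ↔
      ∀ p : ℕ, p.Prime → (Nat.gcd d (N * k / d)).factorization p = m.factorization p := by
    constructor
    · intro h p _; rw [h]
    · intro h
      have hg0 : Nat.gcd d (N * k / d) ≠ 0 := Nat.gcd_ne_zero_left hd0
      refine Nat.eq_of_factorization_eq hg0 hm0 (fun p => ?_)
      by_cases hp : p.Prime
      · exact h p hp
      · rw [Nat.factorization_eq_zero_of_not_prime _ hp,
          Nat.factorization_eq_zero_of_not_prime _ hp]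
  rw [key]
  apply forall_congr'
  intro p
  apply imp_congr_right
  intro hp
  rw [hfg p]
  have h1 : d.factorization p ≤ N.factorization p :=
    (Nat.factorization_le_iff_dvd hd0 hN0).mpr hd p
  have h2 : m.factorization p ≤ N.factorization p :=
    (Nat.factorization_le_iff_dvd hm0 hN0).mpr hm p
  have h3 : 2 * m.factorization p ≤ N.factorization p + k.factorization p := by
    have := (Nat.factorization_le_iff_dvd (pow_ne_zero 2 hm0)
      (Nat.mul_ne_zero hN0 hk0)).mpr hm2 p
    rwa [Nat.factorization_pow, Finsupp.smul_apply, smul_eq_mul,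
      Nat.factorization_mul hN0 hk0, Finsupp.add_apply] at this
  omega
end

section
/- Let N ≥ 2 and k ≥ 1 be integers and let a ∈ ℤ/N, with (N,k,a) ≠ (2,2,1). Then there exists a function f : ℤ/N → ℕ with ∑_{i ∈ ℤ/N} f(i) = k, with ∑_{i ∈ ℤ/N} i·f(i) = a in ℤ/N, and such that f has trivial rotation stabiliser: for every j ∈ ℤ/N, if f(i − j) = f(i) for all i ∈ ℤ/N, then j = 0. -/
/-!
Encode `f` as the multiplicity function of a multiset `s` of size `k` with sum `a`. A shift
fixing `f` fixes every fibre of `f`, so `f` has trivial stabiliser as soon as some value is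
attained exactly once, or exactly at two points `b, c` with `b - c ≠ c - b`. Hence take
`k • {b}` with `k • b = a`, `(k - 1) • {0} + {a}` for `k ≥ 3`, and, for `k = 2`, either `{c, c}`
with `c + c = a` or `{b, c}` with `b + c = a` and `2 (b - c) ≠ 0`, which exists outside
`(N, a) = (2, 1)`.
-/

open Multiset

def HasTrivialShiftStabiliser {G β : Type*} [AddGroup G] (f : G → β) : Prop :=
  ∀ j, (∀ i, f (i - j) = f i) → j = 0

namespace HasTrivialShiftStabiliser

variable {G β : Type*}

theorem of_unique_value [AddGroup G] {f : G → β} {b : G} (hb : ∀ x, f x = f b → x = b) :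
    HasTrivialShiftStabiliser f :=
  fun _ hj => sub_eq_self.mp (hb _ (hj b))

theorem of_pair_fiber [AddCommGroup G] {f : G → β} {b c : G}
    (hf : ∀ x, f x = f b ↔ x = b ∨ x = c) (hbc : b - c ≠ c - b) :
    HasTrivialShiftStabiliser f := by
  intro j hj
  rcases (hf (b - j)).1 (hj b) with hb | hb
  · exact sub_eq_self.mp hb
  rcases (hf (c - j)).1 ((hj c).trans ((hf c).2 (.inr rfl))) with hc | hc
  · have hjb : j = b - c := by rw [← hb]; abel
    have hjc : j = c - b := by rw [← hc]; abel
    exact absurd (hjb.symm.trans hjc) hbc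
  · exact sub_eq_self.mp hc

variable [AddCommGroup G] [DecidableEq G]

theorem count_replicate {k : ℕ} (hk : k ≠ 0) (b : G) :
    HasTrivialShiftStabiliser fun i => (replicate k b).count i :=
  of_unique_value (b := b) fun x hx => by
    by_contra hxb
    simp [Multiset.count_replicate, Ne.symm hxb, hk.symm] at hx

theorem count_pair {b c : G} (hbc : b - c ≠ c - b) :
    HasTrivialShiftStabiliser fun i => ({b, c} : Multiset G).count i := by
  have hne : b ≠ c := fun h => hbc (by rw [h])
  refine of_pair_fiber (fun x => ?_) hbc
  simp only [insert_eq_cons, count_cons, count_singleton]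
  split_ifs <;> simp_all

theorem count_cons_replicate_zero {n : ℕ} (hn : 2 ≤ n) {a : G} (ha : a ≠ 0) :
    HasTrivialShiftStabiliser fun i => (a ::ₘ replicate n 0).count i :=
  of_unique_value (b := 0) fun x hx => by
    simp only [count_cons, Multiset.count_replicate] at hx
    split_ifs at hx <;> simp_all <;> omega

end HasTrivialShiftStabiliser

theorem Multiset.sum_univ_count {α : Type*} [Fintype α] [DecidableEq α] (s : Multiset α) :
    ∑ i, s.count i = card s :=
  sum_count_eq_card fun a _ => Finset.mem_univ a

theorem Multiset.sum_univ_mul_count {R : Type*} [CommSemiring R] [Fintype R] [DecidableEq R]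
    (s : Multiset R) : ∑ i, i * (s.count i : R) = s.sum := by
  simp_rw [Finset.sum_multiset_count_of_subset s Finset.univ (Finset.subset_univ _), nsmul_eq_mul,
    mul_comm]

theorem ZMod.exists_add_self_eq_or_exists_add_eq_and_sub_ne {N : ℕ} [NeZero N] (a : ZMod N)
    (h : ¬(N = 2 ∧ a = 1)) :
    (∃ c, c + c = a) ∨ ∃ b c, b + c = a ∧ b - c ≠ c - b := by
  by_cases h2a : a + a = 0
  · by_cases hdouble : ∃ c, c + c = a
    · exact .inl hdouble
    -- `a = 1 + (a - 1)` is a good splitting unless `4 = 0`, and for `N ∣ 4` every exception is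
    -- the excluded `a = 1` in `ZMod 2`.
    refine .inr ⟨1, a - 1, by ring, fun h4 => ?_⟩
    have h4 : ((4 : ℕ) : ZMod N) = 0 := by push_cast; linear_combination h4 + h2a
    have hN : N ∈ Nat.divisors 4 :=
      Nat.mem_divisors.2 ⟨(ZMod.natCast_eq_zero_iff 4 N).1 h4, by norm_num⟩
    obtain rfl | rfl | rfl : N = 1 ∨ N = 2 ∨ N = 4 := by
      simpa [show Nat.divisors 4 = {1, 2, 4} by decide] using hN
    all_goals revert a; decide
  · exact .inr ⟨a, 0, add_zero a, fun h => h2a (by linear_combination h)⟩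

theorem exists_weight_trivial_cyclic_stabiliser_general (N k : ℕ) [NeZero N]
    (hk : 1 ≤ k) (a : ZMod N) (hexc : ¬(N = 2 ∧ k = 2 ∧ a = 1)) :
    ∃ f : ZMod N → ℕ,
      (∑ i : ZMod N, f i = k) ∧
      (∑ i : ZMod N, i * (f i : ZMod N) = a) ∧
      (∀ j : ZMod N, (∀ i : ZMod N, f (i - j) = f i) → j = 0) := by
  suffices ∃ s : Multiset (ZMod N), card s = k ∧ s.sum = a ∧
      HasTrivialShiftStabiliser fun i => s.count i by
    obtain ⟨s, rfl, rfl, hs⟩ := this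
    exact ⟨fun i => s.count i, s.sum_univ_count, s.sum_univ_mul_count, hs⟩
  obtain rfl | rfl | hk3 : k = 1 ∨ k = 2 ∨ 3 ≤ k := by omega
  · exact ⟨replicate 1 a, by simp, by simp, .count_replicate one_ne_zero a⟩
  · rcases a.exists_add_self_eq_or_exists_add_eq_and_sub_ne (by tauto) with
      ⟨c, rfl⟩ | ⟨b, c, rfl, hbc⟩
    · exact ⟨replicate 2 c, by simp, by simp, .count_replicate two_ne_zero c⟩
    · exact ⟨{b, c}, by simp, by simp, .count_pair hbc⟩
  by_cases ha : a = 0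
  · exact ⟨replicate k 0, by simp, by simp [ha], .count_replicate (by omega) 0⟩
  · refine ⟨a ::ₘ replicate (k - 1) 0, by rw [card_cons, card_replicate]; omega, by simp, ?_⟩
    exact .count_cons_replicate_zero (by omega) ha

theorem exists_weight_trivial_cyclic_stabiliser (N k : ℕ) [NeZero N] (hN : 2 ≤ N)
    (hk : 1 ≤ k) (a : ZMod N) (hexc : ¬(N = 2 ∧ k = 2 ∧ a = 1)) :
    ∃ f : ZMod N → ℕ,
      (∑ i : ZMod N, f i = k) ∧
      (∑ i : ZMod N, i * (f i : ZMod N) = a) ∧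
      (∀ j : ZMod N, (∀ i : ZMod N, f (i - j) = f i) → j = 0) :=
  exists_weight_trivial_cyclic_stabiliser_general N k hk a hexc
end

section
/- Let r ≥ 3 and k ≥ 3 be integers with (r,k) not among (3,4), (4,5), (5,3). Define f : ℤ/(r+1) → ℕ by f(0) = k−3, f(1) = 2, f(r−1) = 1, and f(i) = 0 for all other i. Then for every j ∈ ℤ/(r+1) there exists i ∈ ℤ/(r+1) with f(j − i) ≠ f(i); that is, the reversal of f is not equal to any cyclic rotation of f. -/
theorem reversal_ne_rotation_generic (r k : ℕ) (hr : 3 ≤ r) (hk : 3 ≤ k)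
    (hexc : ¬(r = 3 ∧ k = 4) ∧ ¬(r = 4 ∧ k = 5) ∧ ¬(r = 5 ∧ k = 3)) :
    ∀ j : ZMod (r + 1), ∃ i : ZMod (r + 1),
      (fun i : ZMod (r + 1) =>
        if i = 0 then k - 3
        else if i = 1 then 2
        else if i = (r : ZMod (r + 1)) - 1 then 1
        else 0) (j - i)
      ≠ (fun i : ZMod (r + 1) =>
        if i = 0 then k - 3
        else if i = 1 then 2
        else if i = (r : ZMod (r + 1)) - 1 then 1
        else 0) i := by
  intro j
  by_contra hcon
  push_neg at hcon
  have hself : ((r + 1 : ℕ) : ZMod (r + 1)) = 0 := ZMod.natCast_self _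
  have hrneg : (r : ZMod (r + 1)) - 1 = -2 := by
    push_cast at hself; linear_combination hself
  simp only [hrneg] at hcon
  have hne : ∀ m : ℕ, 0 < m → m < r + 1 → ((m : ℕ) : ZMod (r + 1)) ≠ 0 := by
    intro m h1 h2 h0
    rw [ZMod.natCast_eq_zero_iff] at h0
    exact absurd (Nat.le_of_dvd h1 h0) (by omega)
  have hdvd : ∀ m : ℕ, ((m : ℕ) : ZMod (r + 1)) = 0 → r + 1 ∣ m := by
    intro m h; rwa [ZMod.natCast_eq_zero_iff] at h
  have h10 : (1 : ZMod (r + 1)) ≠ 0 := by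
    have := hne 1 one_pos (by omega); simpa using this
  have h20 : (-2 : ZMod (r + 1)) ≠ 0 := by
    intro h
    exact hne 2 (by norm_num) (by omega) (by push_cast; linear_combination -h)
  have h21 : (-2 : ZMod (r + 1)) ≠ 1 := by
    intro h
    exact hne 3 (by norm_num) (by omega) (by push_cast; linear_combination -h)
  have h1 := hcon 1
  have h2 := hcon (-2)
  rw [if_neg h10, if_pos rfl] at h1
  rw [if_neg h20, if_neg h21, if_pos rfl] at h2
  split_ifs at h1 with ha1 ha2 ha3 <;> try omega
  · -- j - 1 = 0, k - 3 = 2  (so k = 5, j = 1)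
    split_ifs at h2 with hb1 hb2 hb3 <;> try omega
    -- j + 2 = -2, so j = -4, with j = 1 : 5 = 0
    have h5 : ((5 : ℕ) : ZMod (r + 1)) = 0 := by
      push_cast; linear_combination hb3 - ha1
    have hub := Nat.le_of_dvd (by norm_num) (hdvd 5 h5)
    have hub2 : r ≤ 4 := by omega
    interval_cases r
    · exact absurd (hdvd 5 h5) (by norm_num)
    · exact hexc.2.1 ⟨rfl, by omega⟩
  · -- j - 1 = 1, so j = 2
    split_ifs at h2 with hb1 hb2 hb3 <;> try omega
    · -- j + 2 = 0, k - 3 = 1 (k = 4), j = -2 with j = 2 : 4 = 0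
      have h4 : ((4 : ℕ) : ZMod (r + 1)) = 0 := by
        push_cast; linear_combination hb1 - ha2
      have hub := Nat.le_of_dvd (by norm_num) (hdvd 4 h4)
      have hub2 : r ≤ 3 := by omega
      interval_cases r
      exact hexc.1 ⟨rfl, by omega⟩
    · -- j + 2 = -2 : 6 = 0
      have h6 : ((6 : ℕ) : ZMod (r + 1)) = 0 := by
        push_cast; linear_combination hb3 - ha2
      have hub := Nat.le_of_dvd (by norm_num) (hdvd 6 h6)
      have hub2 : r ≤ 5 := by omega
      interval_cases r
      · exact absurd (hdvd 6 h6) (by norm_num)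
      · exact absurd (hdvd 6 h6) (by norm_num)
      · -- r = 5, ZMod 6, j = 2
        have hj : j = 2 := by linear_combination ha2
        have h3 := hcon 2
        rw [hj, sub_self, if_pos rfl, if_neg (by decide : (2 : ZMod 6) ≠ 0),
          if_neg (by decide : (2 : ZMod 6) ≠ 1),
          if_neg (by decide : (2 : ZMod 6) ≠ -2)] at h3
        exact hexc.2.2 ⟨rfl, by omega⟩
end
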